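/- arXiv:math-ph/0112031 — 5 statements merged into one kernel-verified Lean document; each statement's English description precedes it below -/
import Mathlib

section
/- Assume n ≥ 2 and let (C^{p,q,r}, d, δ, ∂) be an abstract Čech–variational tricomplex with a source decomposition (S^r)_{r}. Let ω^{(0)} ∈ C^{0,n,0} and ω^{(1)} ∈ C^{0,n-1,1} satisfy the descent relation δω^{(0)} = (-1)^n dω^{(1)}, and suppose ∂ω^{(0)} = a + dγ^{(0)} with a ∈ S^0 and γ^{(0)} ∈ C^{1,n-1,0}. Then δa = 0 (the source forms glue), and d(∂ω^{(1)} - (-1)^n δγ^{(0)}) = 0. -/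
/-- Let `n = m + 2 ≥ 2` and let `(C^{p,q,r}, d, δ, var)` be an
abstract Čech–variational tricomplex (here `var` denotes the variational
differential `∂`) with a source decomposition `(S^r)_r`: each `S^r ⊆ C^{1,n,r}`
is a subgroup with `C^{1,n,r}` the internal direct sum of `S^r` and
`d(C^{1,n-1,r})`, and `δ(S^r) ⊆ S^{r+1}`.  Let `ω⁽⁰⁾ ∈ C^{0,n,0}` and
`ω⁽¹⁾ ∈ C^{0,n-1,1}` satisfy the descent relation `δω⁽⁰⁾ = (-1)^n dω⁽¹⁾`, and
suppose `var ω⁽⁰⁾ = a + dγ⁽⁰⁾` with `a ∈ S^0` and `γ⁽⁰⁾ ∈ C^{1,n-1,0}`.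
Then `δa = 0` (the source forms glue), and `d(var ω⁽¹⁾ - (-1)^n δγ⁽⁰⁾) = 0`. -/
theorem source_forms_glue (m : ℕ)
    (C : ℕ → ℕ → ℕ → Type*) [∀ p q r, AddCommGroup (C p q r)]
    (d : ∀ p q r, C p q r →+ C p (q+1) r)
    (δ : ∀ p q r, C p q r →+ C p q (r+1))
    (var : ∀ p q r, C p q r →+ C (p+1) q r)
    (hdd : ∀ p q r (x : C p q r), d p (q+1) r (d p q r x) = 0)
    (hδδ : ∀ p q r (x : C p q r), δ p q (r+1) (δ p q r x) = 0)
    (hvarvar : ∀ p q r (x : C p q r), var (p+1) q r (var p q r x) = 0)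
    (hdδ : ∀ p q r (x : C p q r), d p q (r+1) (δ p q r x) = δ p (q+1) r (d p q r x))
    (hdvar : ∀ p q r (x : C p q r), d (p+1) q r (var p q r x) = var p (q+1) r (d p q r x))
    (hδvar : ∀ p q r (x : C p q r), δ (p+1) q r (var p q r x) = var p q (r+1) (δ p q r x))
    (S : ∀ r, AddSubgroup (C 1 (m+2) r))
    (hSdisj : ∀ r, S r ⊓ (d 1 (m+1) r).range = ⊥)
    (hSsum : ∀ r, S r ⊔ (d 1 (m+1) r).range = ⊤)
    (hSδ : ∀ r, ∀ x ∈ S r, δ 1 (m+2) r x ∈ S (r+1))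
    (ω0 : C 0 (m+2) 0) (ω1 : C 0 (m+1) 1)
    (hdesc : δ 0 (m+2) 0 ω0 = ((-1 : ℤ)^(m+2)) • d 0 (m+1) 1 ω1)
    (a : C 1 (m+2) 0) (ha : a ∈ S 0) (γ0 : C 1 (m+1) 0)
    (hvar : var 0 (m+2) 0 ω0 = a + d 1 (m+1) 0 γ0) :
    δ 1 (m+2) 0 a = 0 ∧
      d 1 (m+1) 1 (var 0 (m+1) 1 ω1 - ((-1 : ℤ)^(m+2)) • δ 1 (m+1) 0 γ0) = 0 := by

  have hδvar0 : δ 1 (m+2) 0 (var 0 (m+2) 0 ω0) = var 0 (m+2) 1 (δ 0 (m+2) 0 ω0) :=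
    hδvar 0 (m+2) 0 ω0
  have key : δ 1 (m+2) 0 a =
      d 1 (m+1) 1 (((-1 : ℤ)^(m+2)) • var 0 (m+1) 1 ω1 - δ 1 (m+1) 0 γ0) := by
    have h1 : δ 1 (m+2) 0 (var 0 (m+2) 0 ω0)
        = ((-1 : ℤ)^(m+2)) • d 1 (m+1) 1 (var 0 (m+1) 1 ω1) := by
      rw [hδvar0, hdesc, map_zsmul, ← hdvar]
    have h2 : δ 1 (m+2) 0 (var 0 (m+2) 0 ω0)
        = δ 1 (m+2) 0 a + d 1 (m+1) 1 (δ 1 (m+1) 0 γ0) := by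
      rw [hvar, map_add, hdδ]
    rw [map_sub, map_zsmul]
    rw [h2] at h1
    linear_combination (norm := abel) h1
  have hmem : δ 1 (m+2) 0 a ∈ S 1 ⊓ (d 1 (m+1) 1).range := by
    exact ⟨hSδ 0 a ha, ⟨_, key.symm⟩⟩
  have hz : δ 1 (m+2) 0 a = 0 := by
    rw [hSdisj 1] at hmem; exact hmem
  refine ⟨hz, ?_⟩
  calc d 1 (m+1) 1 (var 0 (m+1) 1 ω1 - ((-1 : ℤ)^(m+2)) • δ 1 (m+1) 0 γ0)
      = ((-1 : ℤ)^(m+2)) • d 1 (m+1) 1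
        (((-1 : ℤ)^(m+2)) • var 0 (m+1) 1 ω1 - δ 1 (m+1) 0 γ0) := by
        rw [map_sub, map_sub, map_zsmul, map_zsmul, smul_sub, smul_smul,
          ← pow_add, ← two_mul, pow_mul]
        norm_num
    _ = ((-1 : ℤ)^(m+2)) • δ 1 (m+2) 0 a := by rw [key]
    _ = 0 := by rw [hz, smul_zero]
end

section
/- Assume n ≥ 2 and let (C^{p,q,r}, d, δ, ∂) be an abstract Čech–variational tricomplex with a source decomposition (S^r)_r. Let ω^{(0)} ∈ C^{0,n,0} and ω^{(1)} ∈ C^{0,n-1,1} satisfy δω^{(0)} = (-1)^n dω^{(1)}, and suppose ∂ω^{(0)} = a + dγ^{(0)} with a ∈ S^0 and γ^{(0)} ∈ C^{1,n-1,0}. Assume moreover d-exactness at the spot C^{1,n-1,1}: every element of the kernel of d : C^{1,n-1,1} → C^{1,n,1} lies in the image of d : C^{1,n-2,1} → C^{1,n-1,1}. Then there exists γ^{(1)} ∈ C^{1,n-2,1} such that ∂ω^{(1)} = (-1)^n δγ^{(0)} + dγ^{(1)}. -/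
/-- Let `n = m + 2 ≥ 2` and let `(C^{p,q,r}, d, δ, var)` be an
abstract Čech–variational tricomplex (`var` is the variational differential
`∂`) with a source decomposition `(S^r)_r`.  Let `ω⁽⁰⁾ ∈ C^{0,n,0}` and
`ω⁽¹⁾ ∈ C^{0,n-1,1}` satisfy `δω⁽⁰⁾ = (-1)^n dω⁽¹⁾`, and suppose
`var ω⁽⁰⁾ = a + dγ⁽⁰⁾` with `a ∈ S^0` and `γ⁽⁰⁾ ∈ C^{1,n-1,0}`.  Assume
moreover `d`-exactness at the spot `C^{1,n-1,1}`: every element of the kernel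
of `d : C^{1,n-1,1} → C^{1,n,1}` lies in the image of
`d : C^{1,n-2,1} → C^{1,n-1,1}`.  Then there exists `γ⁽¹⁾ ∈ C^{1,n-2,1}` such
that `var ω⁽¹⁾ = (-1)^n δγ⁽⁰⁾ + dγ⁽¹⁾`. -/
theorem first_cartan_descent_step (m : ℕ)
    (C : ℕ → ℕ → ℕ → Type*) [∀ p q r, AddCommGroup (C p q r)]
    (d : ∀ p q r, C p q r →+ C p (q+1) r)
    (δ : ∀ p q r, C p q r →+ C p q (r+1))
    (var : ∀ p q r, C p q r →+ C (p+1) q r)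
    (hdd : ∀ p q r (x : C p q r), d p (q+1) r (d p q r x) = 0)
    (hδδ : ∀ p q r (x : C p q r), δ p q (r+1) (δ p q r x) = 0)
    (hvarvar : ∀ p q r (x : C p q r), var (p+1) q r (var p q r x) = 0)
    (hdδ : ∀ p q r (x : C p q r), d p q (r+1) (δ p q r x) = δ p (q+1) r (d p q r x))
    (hdvar : ∀ p q r (x : C p q r), d (p+1) q r (var p q r x) = var p (q+1) r (d p q r x))
    (hδvar : ∀ p q r (x : C p q r), δ (p+1) q r (var p q r x) = var p q (r+1) (δ p q r x))
    (S : ∀ r, AddSubgroup (C 1 (m+2) r))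
    (hSdisj : ∀ r, S r ⊓ (d 1 (m+1) r).range = ⊥)
    (hSsum : ∀ r, S r ⊔ (d 1 (m+1) r).range = ⊤)
    (hSδ : ∀ r, ∀ x ∈ S r, δ 1 (m+2) r x ∈ S (r+1))
    (ω0 : C 0 (m+2) 0) (ω1 : C 0 (m+1) 1)
    (hdesc : δ 0 (m+2) 0 ω0 = ((-1 : ℤ)^(m+2)) • d 0 (m+1) 1 ω1)
    (a : C 1 (m+2) 0) (ha : a ∈ S 0) (γ0 : C 1 (m+1) 0)
    (hvar : var 0 (m+2) 0 ω0 = a + d 1 (m+1) 0 γ0)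
    (hexact : ∀ x : C 1 (m+1) 1, d 1 (m+1) 1 x = 0 →
      ∃ y : C 1 m 1, d 1 m 1 y = x) :
    ∃ γ1 : C 1 m 1,
      var 0 (m+1) 1 ω1 = ((-1 : ℤ)^(m+2)) • δ 1 (m+1) 0 γ0 + d 1 m 1 γ1 := by
  set ε : ℤ := ((-1 : ℤ)^(m+2)) with hε
  have hε2 : ε * ε = 1 := by
    rw [hε, ← pow_add]
    exact Even.neg_one_pow ⟨m + 2, by ring⟩
  -- key: δa = d (ε • var ω1 - δ γ0)
  have key : δ 1 (m+2) 0 a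
      = d 1 (m+1) 1 (ε • var 0 (m+1) 1 ω1 - δ 1 (m+1) 0 γ0) := by
    have h1 : δ 1 (m+2) 0 (var 0 (m+2) 0 ω0)
        = ε • d 1 (m+1) 1 (var 0 (m+1) 1 ω1) := by
      rw [hδvar, hdesc, map_zsmul, hdvar]
    have h2 : δ 1 (m+2) 0 (var 0 (m+2) 0 ω0)
        = δ 1 (m+2) 0 a + d 1 (m+1) 1 (δ 1 (m+1) 0 γ0) := by
      rw [hvar, map_add, hdδ]
    rw [map_sub, map_zsmul]
    rw [h2] at h1
    linear_combination (norm := abel) h1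
  -- δa is in both S 1 and the range of d, hence zero
  have hzero : δ 1 (m+2) 0 a = 0 := by
    have hmem : δ 1 (m+2) 0 a ∈ S 1 ⊓ (d 1 (m+1) 1).range :=
      ⟨hSδ 0 a ha, ⟨_, key.symm⟩⟩
    rw [hSdisj 1] at hmem
    exact hmem
  have hker : d 1 (m+1) 1 (ε • var 0 (m+1) 1 ω1 - δ 1 (m+1) 0 γ0) = 0 := by
    rw [← key, hzero]
  obtain ⟨y, hy⟩ := hexact _ hker
  refine ⟨ε • y, ?_⟩
  rw [map_zsmul, hy, smul_sub, smul_smul, hε2, one_smul]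
  abel
end

section
/- Assume n ≥ 2 and let (C^{p,q,r}, d, δ, ∂) be an abstract Čech–variational tricomplex. Let 1 ≤ r ≤ n-2, and suppose given ω^{(r)} ∈ C^{0,n-r,r}, ω^{(r+1)} ∈ C^{0,n-r-1,r+1}, γ^{(r-1)} ∈ C^{1,n-r,r-1} and γ^{(r)} ∈ C^{1,n-r-1,r} such that: (i) ∂ω^{(r)} = (-1)^{n-r+1} δγ^{(r-1)} + dγ^{(r)}; (ii) dω^{(r+1)} = (-1)^{n-r} δω^{(r)}; and (iii) d-exactness holds at the spot C^{1,n-r-1,r+1}: every element of the kernel of d : C^{1,n-r-1,r+1} → C^{1,n-r,r+1} lies in the image of d : C^{1,n-r-2,r+1} → C^{1,n-r-1,r+1}. Then there exists γ^{(r+1)} ∈ C^{1,n-r-2,r+1} such that ∂ω^{(r+1)} = (-1)^{n-r} δγ^{(r)} + dγ^{(r+1)}. -/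
/-- (Inductive step for the global Cartan form.)  Here the
Čech degree is `r + 1` (so that `1 ≤ r + 1`) and `n = (r+1) + s + 2` (so that
`r + 1 ≤ n - 2` and `n ≥ 2`); thus `n - (r+1) = s + 2`, `n - (r+1) - 1 = s + 1`
and `n - (r+1) - 2 = s`, and the signs are `(-1)^{n-(r+1)+1} = (-1)^{s+3}` and
`(-1)^{n-(r+1)} = (-1)^{s+2}`.  Given `ω⁽ʳ⁺¹⁾ ∈ C^{0,s+2,r+1}`,
`ω⁽ʳ⁺²⁾ ∈ C^{0,s+1,r+2}`, `γ⁽ʳ⁾ ∈ C^{1,s+2,r}` and `γ⁽ʳ⁺¹⁾ ∈ C^{1,s+1,r+1}`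
with (i) `var ω⁽ʳ⁺¹⁾ = (-1)^{s+3} δγ⁽ʳ⁾ + dγ⁽ʳ⁺¹⁾`,
(ii) `dω⁽ʳ⁺²⁾ = (-1)^{s+2} δω⁽ʳ⁺¹⁾`, and (iii) `d`-exactness at `C^{1,s+1,r+2}`,
there exists `γ⁽ʳ⁺²⁾ ∈ C^{1,s,r+2}` with
`var ω⁽ʳ⁺²⁾ = (-1)^{s+2} δγ⁽ʳ⁺¹⁾ + dγ⁽ʳ⁺²⁾`.  (`var` denotes the variational
differential `∂`.) -/
theorem cartan_descent_inductive_step (r s : ℕ)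
    (C : ℕ → ℕ → ℕ → Type*) [∀ p q r, AddCommGroup (C p q r)]
    (d : ∀ p q r, C p q r →+ C p (q+1) r)
    (δ : ∀ p q r, C p q r →+ C p q (r+1))
    (var : ∀ p q r, C p q r →+ C (p+1) q r)
    (hdd : ∀ p q r (x : C p q r), d p (q+1) r (d p q r x) = 0)
    (hδδ : ∀ p q r (x : C p q r), δ p q (r+1) (δ p q r x) = 0)
    (hvarvar : ∀ p q r (x : C p q r), var (p+1) q r (var p q r x) = 0)
    (hdδ : ∀ p q r (x : C p q r), d p q (r+1) (δ p q r x) = δ p (q+1) r (d p q r x))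
    (hdvar : ∀ p q r (x : C p q r), d (p+1) q r (var p q r x) = var p (q+1) r (d p q r x))
    (hδvar : ∀ p q r (x : C p q r), δ (p+1) q r (var p q r x) = var p q (r+1) (δ p q r x))
    (ω : C 0 (s+2) (r+1)) (ω' : C 0 (s+1) (r+2))
    (γprev : C 1 (s+2) r) (γ : C 1 (s+1) (r+1))
    (hvar : var 0 (s+2) (r+1) ω
      = ((-1 : ℤ)^(s+3)) • δ 1 (s+2) r γprev + d 1 (s+1) (r+1) γ)
    (hdesc : d 0 (s+1) (r+2) ω' = ((-1 : ℤ)^(s+2)) • δ 0 (s+2) (r+1) ω)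
    (hexact : ∀ x : C 1 (s+1) (r+2), d 1 (s+1) (r+2) x = 0 →
      ∃ y : C 1 s (r+2), d 1 s (r+2) y = x) :
    ∃ γ' : C 1 s (r+2),
      var 0 (s+1) (r+2) ω' = ((-1 : ℤ)^(s+2)) • δ 1 (s+1) (r+1) γ + d 1 s (r+2) γ' := by
  set z : C 1 (s+1) (r+2) :=
    var 0 (s+1) (r+2) ω' - ((-1 : ℤ)^(s+2)) • δ 1 (s+1) (r+1) γ with hz
  have hdz : d 1 (s+1) (r+2) z = 0 := by
    rw [hz, map_sub, map_zsmul, hdvar, hdesc, map_zsmul,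
      ← hδvar 0 (s+2) (r+1) ω, hvar, map_add, map_zsmul, hδδ, smul_zero]
    show ((-1 : ℤ)^(s+2)) • ((0 : C 1 (s+2) (r+2))
          + δ 1 (s+2) (r+1) (d 1 (s+1) (r+1) γ))
        - ((-1 : ℤ)^(s+2)) • d 1 (s+1) (r+2) (δ 1 (s+1) (r+1) γ) = 0
    rw [zero_add, hdδ, sub_self]
  obtain ⟨y, hy⟩ := hexact z hdz
  exact ⟨y, by rw [hy, hz]; abel⟩
end

section
/- Assume n ≥ 2 and let (C^{p,q,r}, d, δ, ∂) be an abstract Čech–variational tricomplex. Suppose given ω^{(n-1)} ∈ C^{0,1,n-1}, ω^{(n)} ∈ C^{0,0,n}, γ^{(n-2)} ∈ C^{1,1,n-2} and γ^{(n-1)} ∈ C^{1,0,n-1} such that: (i) ∂ω^{(n-1)} = δγ^{(n-2)} + dγ^{(n-1)}; (ii) dω^{(n)} = -δω^{(n-1)}; and (iii) d : C^{1,0,n} → C^{1,1,n} is injective. Then ∂ω^{(n)} = -δγ^{(n-1)}; in particular the variation of the top Čech component ω^{(n)} contains no d-exact term and no additive constant. -/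
/-- (Last descent step.)  Let `n = m + 2 ≥ 2` and let
`(C^{p,q,r}, d, δ, var)` be an abstract Čech–variational tricomplex (`var` is
the variational differential `∂`).  Suppose given `ω⁽ⁿ⁻¹⁾ ∈ C^{0,1,n-1}`,
`ω⁽ⁿ⁾ ∈ C^{0,0,n}`, `γ⁽ⁿ⁻²⁾ ∈ C^{1,1,n-2}` and `γ⁽ⁿ⁻¹⁾ ∈ C^{1,0,n-1}` such
that (i) `var ω⁽ⁿ⁻¹⁾ = δγ⁽ⁿ⁻²⁾ + dγ⁽ⁿ⁻¹⁾`; (ii) `dω⁽ⁿ⁾ = -δω⁽ⁿ⁻¹⁾`; and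
(iii) `d : C^{1,0,n} → C^{1,1,n}` is injective.  Then
`var ω⁽ⁿ⁾ = -δγ⁽ⁿ⁻¹⁾`; in particular the variation of the top Čech component
`ω⁽ⁿ⁾` contains no `d`-exact term and no additive constant. -/
theorem top_cech_descent_step (m : ℕ)
    (C : ℕ → ℕ → ℕ → Type*) [∀ p q r, AddCommGroup (C p q r)]
    (d : ∀ p q r, C p q r →+ C p (q+1) r)
    (δ : ∀ p q r, C p q r →+ C p q (r+1))
    (var : ∀ p q r, C p q r →+ C (p+1) q r)
    (hdd : ∀ p q r (x : C p q r), d p (q+1) r (d p q r x) = 0)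
    (hδδ : ∀ p q r (x : C p q r), δ p q (r+1) (δ p q r x) = 0)
    (hvarvar : ∀ p q r (x : C p q r), var (p+1) q r (var p q r x) = 0)
    (hdδ : ∀ p q r (x : C p q r), d p q (r+1) (δ p q r x) = δ p (q+1) r (d p q r x))
    (hdvar : ∀ p q r (x : C p q r), d (p+1) q r (var p q r x) = var p (q+1) r (d p q r x))
    (hδvar : ∀ p q r (x : C p q r), δ (p+1) q r (var p q r x) = var p q (r+1) (δ p q r x))
    (ωn1 : C 0 1 (m+1)) (ωn : C 0 0 (m+2))
    (γn2 : C 1 1 m) (γn1 : C 1 0 (m+1))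
    (hvar : var 0 1 (m+1) ωn1 = δ 1 1 m γn2 + d 1 0 (m+1) γn1)
    (hdesc : d 0 0 (m+2) ωn = - δ 0 1 (m+1) ωn1)
    (hinj : Function.Injective (d 1 0 (m+2))) :
    var 0 0 (m+2) ωn = - δ 1 0 (m+1) γn1 := by
  apply hinj
  have h1 : d 1 0 (m+2) (var 0 0 (m+2) ωn) = var 0 1 (m+2) (d 0 0 (m+2) ωn) :=
    hdvar 0 0 (m+2) ωn
  rw [h1, hdesc, map_neg, map_neg, ← hδvar, hvar, map_add, hδδ]
  simp [hdδ 1 0 (m+1) γn1]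
end

section
/- (Abstract form of the main theorem.) Assume n ≥ 2 and let (C^{p,q,r}, d, δ, ∂) be an abstract Čech–variational tricomplex with a source decomposition (S^r)_r. Let ω^{(r)} ∈ C^{0,n-r,r} for 0 ≤ r ≤ n be a Lagrangian descent datum, i.e. (-1)^{n-r} δω^{(r)} = dω^{(r+1)} for all 0 ≤ r ≤ n-1. Assume Takens exactness in variational degree 1: for every Čech degree r, d : C^{1,0,r} → C^{1,1,r} is injective, and for 1 ≤ q ≤ n-1 the kernel of d : C^{1,q,r} → C^{1,q+1,r} equals the image of d : C^{1,q-1,r} → C^{1,q,r}. Suppose ∂ω^{(0)} = a + dγ^{(0)} with a ∈ S^0 and γ^{(0)} ∈ C^{1,n-1,0}. Then: (1) δa = 0, so the local source forms glue to a global source form; and (2) there exist γ^{(r)} ∈ C^{1,n-1-r,r} for 1 ≤ r ≤ n-1 such that ∂ω^{(r)} = (-1)^{n-r+1} δγ^{(r-1)} + dγ^{(r)} for all 1 ≤ r ≤ n-1, and ∂ω^{(n)} = -δγ^{(n-1)}. Equivalently, the variation of the total cocycle Ω = ω^{(0)} + ⋯ + ω^{(n)} is solely due to the source form up to a total coboundary: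 ∂Ω = a + DΓ, where Γ = γ^{(0)} + ⋯ + γ^{(n-1)} is the global Cartan form and its top Čech component γ^{(n)} vanishes. -/
/-- (Abstract form of the main theorem.)  Let `n = m + 2 ≥ 2`
and let `(C^{p,q,r}, d, δ, var)` be an abstract Čech–variational tricomplex
(`var` is the variational differential `∂`) with a source decomposition
`(S^r)_r`.  A Lagrangian descent datum is encoded as a family
`ω q r : C^{0,q,r}` for `q + r = n` (so `ω q r` is the component `ω⁽ʳ⁾` of
form degree `q = n - r`), satisfying `(-1)^{n-r} δω⁽ʳ⁾ = dω⁽ʳ⁺¹⁾` for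
`0 ≤ r ≤ n-1`, i.e. `(-1)^{q+1} δ(ω (q+1) r) = d(ω q (r+1))` whenever
`(q+1) + r = n`.  Assume Takens exactness in variational degree 1:
`d : C^{1,0,r} → C^{1,1,r}` is injective for every `r`, and for
`1 ≤ q' ≤ n-1` (written `q' = q+1`, `q ≤ m`) the kernel of
`d : C^{1,q+1,r} → C^{1,q+2,r}` equals the image of
`d : C^{1,q,r} → C^{1,q+1,r}`.  Suppose `var ω⁽⁰⁾ = a + dγ⁽⁰⁾` with `a ∈ S^0`
and `γ⁽⁰⁾ ∈ C^{1,n-1,0}`.  Then (1) `δa = 0`, so the local source forms glue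
to a global source form; and (2) there exist `γ⁽ʳ⁾ ∈ C^{1,n-1-r,r}` for
`1 ≤ r ≤ n-1` (encoded as `γ q r : C^{1,q,r+1}` for `q + r = m`, so
`γ⁽ʳ⁺¹⁾ = γ q r` with `q = n-1-(r+1)`) such that
`var ω⁽ʳ⁾ = (-1)^{n-r+1} δγ⁽ʳ⁻¹⁾ + dγ⁽ʳ⁾` for all `1 ≤ r ≤ n-1`, and
`var ω⁽ⁿ⁾ = -δγ⁽ⁿ⁻¹⁾`.  Equivalently, the variation of the total cocycle
`Ω = ω⁽⁰⁾ + ⋯ + ω⁽ⁿ⁾` is solely due to the source form up to a total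
coboundary, `∂Ω = a + DΓ`, with the global Cartan form
`Γ = γ⁽⁰⁾ + ⋯ + γ⁽ⁿ⁻¹⁾` having vanishing top Čech component `γ⁽ⁿ⁾ = 0`. -/
theorem multivalued_lagrangian_global_source_form (m : ℕ)
    (C : ℕ → ℕ → ℕ → Type*) [∀ p q r, AddCommGroup (C p q r)]
    (d : ∀ p q r, C p q r →+ C p (q+1) r)
    (δ : ∀ p q r, C p q r →+ C p q (r+1))
    (var : ∀ p q r, C p q r →+ C (p+1) q r)
    (hdd : ∀ p q r (x : C p q r), d p (q+1) r (d p q r x) = 0)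
    (hδδ : ∀ p q r (x : C p q r), δ p q (r+1) (δ p q r x) = 0)
    (hvarvar : ∀ p q r (x : C p q r), var (p+1) q r (var p q r x) = 0)
    (hdδ : ∀ p q r (x : C p q r), d p q (r+1) (δ p q r x) = δ p (q+1) r (d p q r x))
    (hdvar : ∀ p q r (x : C p q r), d (p+1) q r (var p q r x) = var p (q+1) r (d p q r x))
    (hδvar : ∀ p q r (x : C p q r), δ (p+1) q r (var p q r x) = var p q (r+1) (δ p q r x))
    (S : ∀ r, AddSubgroup (C 1 (m+2) r))
    (hSdisj : ∀ r, S r ⊓ (d 1 (m+1) r).range = ⊥)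
    (hSsum : ∀ r, S r ⊔ (d 1 (m+1) r).range = ⊤)
    (hSδ : ∀ r, ∀ x ∈ S r, δ 1 (m+2) r x ∈ S (r+1))
    -- the Lagrangian descent datum ω⁽⁰⁾, …, ω⁽ⁿ⁾
    (ω : ∀ q r, q + r = m + 2 → C 0 q r)
    (hdesc : ∀ q r (h : (q+1) + r = m + 2),
      ((-1 : ℤ)^(q+1)) • δ 0 (q+1) r (ω (q+1) r h)
        = d 0 q (r+1) (ω q (r+1) (by omega)))
    -- Takens exactness in variational degree 1
    (hinj : ∀ r, Function.Injective (d 1 0 r))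
    (hexact : ∀ q r, q ≤ m → ∀ x : C 1 (q+1) r,
      d 1 (q+1) r x = 0 → ∃ y : C 1 q r, d 1 q r y = x)
    -- decomposition of the variation of ω⁽⁰⁾
    (a : C 1 (m+2) 0) (ha : a ∈ S 0) (γ0 : C 1 (m+1) 0)
    (hvar0 : var 0 (m+2) 0 (ω (m+2) 0 (by omega)) = a + d 1 (m+1) 0 γ0) :
    -- (1) the source forms glue
    δ 1 (m+2) 0 a = 0 ∧
    -- (2) the global Cartan form
    ∃ γ : ∀ q r, q + r = m → C 1 q (r+1),
      (var 0 (m+1) 1 (ω (m+1) 1 (by omega))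
        = ((-1 : ℤ)^(m+2)) • δ 1 (m+1) 0 γ0 + d 1 m 1 (γ m 0 (by omega))) ∧
      (∀ q r (h : q + 1 + r = m),
        var 0 (q+1) (r+2) (ω (q+1) (r+2) (by omega))
          = ((-1 : ℤ)^(q+2)) • δ 1 (q+1) (r+1) (γ (q+1) r (by omega))
            + d 1 q (r+2) (γ q (r+1) (by omega))) ∧
      var 0 0 (m+2) (ω 0 (m+2) (by omega)) = - δ 1 0 (m+1) (γ 0 m (by omega)) := by
  -- square of a sign acts trivially
  have hsq : ∀ (N : ℕ) {p q r : ℕ} (x : C p q r),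
      ((-1 : ℤ)^N) • ((-1 : ℤ)^N) • x = x := by
    intro N p q r x
    rw [smul_smul, ← pow_add, Even.neg_one_pow ⟨N, rfl⟩, one_smul]
  -- descent relation for the variations
  have hvardesc : ∀ (Q s : ℕ) (hQs : Q + 1 + s = m + 2),
      δ 1 (Q+1) s (var 0 (Q+1) s (ω (Q+1) s hQs))
        = ((-1 : ℤ)^(Q+1)) • d 1 Q (s+1) (var 0 Q (s+1) (ω Q (s+1) (by omega))) := by
    intro Q s hQs
    have h1 : δ 0 (Q+1) s (ω (Q+1) s hQs)
        = ((-1 : ℤ)^(Q+1)) • d 0 Q (s+1) (ω Q (s+1) (by omega)) := by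
      rw [← hdesc Q s hQs, hsq]
    rw [hδvar, h1, map_zsmul, ← hdvar]
  -- the key step lemma
  have key : ∀ (Q s : ℕ) (hQs : Q + 1 + s = m + 2) (cur : C 1 Q s),
      δ 1 (Q+1) s (var 0 (Q+1) s (ω (Q+1) s hQs)) = d 1 Q (s+1) (δ 1 Q s cur) →
      d 1 Q (s+1)
        (((-1 : ℤ)^(Q+1)) • var 0 Q (s+1) (ω Q (s+1) (by omega)) - δ 1 Q s cur) = 0 := by
    intro Q s hQs cur hδc
    rw [map_sub, map_zsmul, ← hδc, hvardesc Q s hQs, sub_self]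
  -- (1) δa = 0
  have hmem : δ 1 (m+2) 0 a ∈ (d 1 (m+1) 1).range := by
    refine ⟨((-1 : ℤ)^(m+2)) • var 0 (m+1) 1 (ω (m+1) 1 (by omega)) - δ 1 (m+1) 0 γ0, ?_⟩
    rw [map_sub, map_zsmul, ← hvardesc (m+1) 0 (by omega), hvar0, map_add, ← hdδ]
    abel
  have hδa : δ 1 (m+2) 0 a = 0 := by
    have hmem2 : δ 1 (m+2) 0 a ∈ S 1 ⊓ (d 1 (m+1) 1).range := ⟨hSδ 0 a ha, hmem⟩
    rw [hSdisj 1] at hmem2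
    exact AddSubgroup.mem_bot.mp hmem2
  -- the first Cartan component
  have hδ0 : δ 1 (m+2) 0 (var 0 (m+2) 0 (ω (m+2) 0 (by omega)))
      = d 1 (m+1) 1 (δ 1 (m+1) 0 γ0) := by
    rw [hvar0, map_add, hδa]
    exact (zero_add _).trans (hdδ 1 (m+1) 0 γ0).symm
  have hker0 := key (m+1) 0 (by omega) γ0 hδ0
  obtain ⟨y0, hy0⟩ := hexact m 1 le_rfl _ hker0
  have hA0 : var 0 (m+1) 1 (ω (m+1) 1 (by omega))
      = ((-1 : ℤ)^(m+2)) • δ 1 (m+1) 0 γ0 + d 1 m 1 (((-1 : ℤ)^(m+2)) • y0) := by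
    rw [map_zsmul, hy0, smul_sub, hsq]
    abel
  have hδA0 : δ 1 (m+1) 1 (var 0 (m+1) 1 (ω (m+1) 1 (by omega)))
      = d 1 m 2 (δ 1 m 1 (((-1 : ℤ)^(m+2)) • y0)) := by
    rw [hA0, map_add, map_zsmul, hδδ, smul_zero, zero_add]
    exact (hdδ 1 m 1 _).symm
  -- the main induction building the chain of Cartan components
  have main : ∀ rr q (hq : q + rr = m),
      ∃ γ : ∀ q' r', q' + r' = m → C 1 q' (r'+1),
        (var 0 (m+1) 1 (ω (m+1) 1 (by omega))
          = ((-1 : ℤ)^(m+2)) • δ 1 (m+1) 0 γ0 + d 1 m 1 (γ m 0 (by omega))) ∧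
        (∀ q' r' (h' : q' + 1 + r' = m), r' < rr →
          var 0 (q'+1) (r'+2) (ω (q'+1) (r'+2) (by omega))
            = ((-1 : ℤ)^(q'+2)) • δ 1 (q'+1) (r'+1) (γ (q'+1) r' (by omega))
              + d 1 q' (r'+2) (γ q' (r'+1) (by omega))) ∧
        (δ 1 (q+1) (rr+1) (var 0 (q+1) (rr+1) (ω (q+1) (rr+1) (by omega)))
          = d 1 q (rr+2) (δ 1 q (rr+1) (γ q rr hq))) := by
    intro rr
    induction rr with
    | zero =>
      intro q hq
      have hqm : m = q := by omega
      subst hqm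
      refine ⟨fun q' r' h' =>
        if hr' : r' = 0 then
          (by
            subst hr'
            have hq' : m = q' := by omega
            subst hq'
            exact ((-1 : ℤ)^(m+2)) • y0)
        else 0, ?_, ?_, ?_⟩
      · beta_reduce
        rw [dif_pos (rfl : (0:ℕ) = 0)]
        exact hA0
      · intro q' r' h' hlt
        exact absurd hlt (Nat.not_lt_zero r')
      · beta_reduce
        rw [dif_pos (rfl : (0:ℕ) = 0)]
        exact hδA0
    | succ r ih =>
      intro q hq
      obtain ⟨γ, hA, hB, hδlast⟩ := ih (q+1) (by omega)
      have hker := key (q+1) (r+1) (by omega) (γ (q+1) r (by omega)) hδlast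
      obtain ⟨y, hy⟩ := hexact q (r+2) (by omega) _ hker
      have hBr : var 0 (q+1) (r+2) (ω (q+1) (r+2) (by omega))
          = ((-1 : ℤ)^(q+2)) • δ 1 (q+1) (r+1) (γ (q+1) r (by omega))
            + d 1 q (r+2) (((-1 : ℤ)^(q+2)) • y) := by
        rw [map_zsmul, hy, smul_sub, hsq]
        abel
      have hδBr : δ 1 (q+1) (r+2) (var 0 (q+1) (r+2) (ω (q+1) (r+2) (by omega)))
          = d 1 q (r+3) (δ 1 q (r+2) (((-1 : ℤ)^(q+2)) • y)) := by
        rw [hBr, map_add, map_zsmul, hδδ, smul_zero, zero_add]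
        exact (hdδ 1 q (r+2) _).symm
      refine ⟨fun q' r' h' =>
        if hr' : r' = r + 1 then
          (by
            subst hr'
            have hq' : q = q' := by omega
            subst hq'
            exact ((-1 : ℤ)^(q+2)) • y)
        else γ q' r' h', ?_, ?_, ?_⟩
      · beta_reduce
        rw [dif_neg (by omega : ¬ (0 : ℕ) = r + 1)]
        exact hA
      · intro q' r' h' hlt
        by_cases hc : r' < r
        · beta_reduce
          rw [dif_neg (by omega : ¬ r' = r + 1), dif_neg (by omega : ¬ r' + 1 = r + 1)]
          exact hB q' r' h' hc
        · have hr'r : r = r' := by omega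
          subst hr'r
          have hq'q : q = q' := by omega
          subst hq'q
          beta_reduce
          rw [dif_neg (by omega : ¬ r = r + 1), dif_pos (rfl : r + 1 = r + 1)]
          exact hBr
      · beta_reduce
        rw [dif_pos (rfl : r + 1 = r + 1)]
        exact hδBr
  obtain ⟨γ, hA, hB, hδlast⟩ := main m 0 (by omega)
  have hker := key 0 (m+1) (by omega) (γ 0 m (by omega)) hδlast
  have h0 : ((-1 : ℤ)^(0+1)) • var 0 0 (m+2) (ω 0 (m+2) (by omega))
      - δ 1 0 (m+1) (γ 0 m (by omega)) = 0 := by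
    apply hinj (m+2)
    rw [hker, map_zero]
  refine ⟨hδa, γ, hA, fun q r h => hB q r h (by omega), ?_⟩
  have h1 := sub_eq_zero.mp h0
  rw [pow_one, neg_one_zsmul] at h1
  exact neg_eq_iff_eq_neg.mp h1
end
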